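/- The Canberra one-dimensional distance δ(a,b) = |a−b|/(|a|+|b|) (with δ(0,0)=0) satisfies the triangle inequality δ(a,c) ≤ δ(a,b) + δ(b,c) for all real a, b, c. -/
import Mathlib

private lemma abs_sub_opp (s t : ℝ) (h : s * t ≤ 0) : |s - t| = |s| + |t| := by
  rcases le_total 0 s with hs | hs <;> rcases le_total 0 t with ht | ht
  · rcases mul_eq_zero.mp (le_antisymm h (mul_nonneg hs ht)) with h0 | h0 <;> subst h0 <;> simp
  · rw [abs_of_nonneg (by linarith), abs_of_nonneg hs, abs_of_nonpos ht]; ring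
  · rw [abs_of_nonpos (by linarith), abs_of_nonpos hs, abs_of_nonneg ht]; ring
  · rcases mul_eq_zero.mp (le_antisymm h (by nlinarith)) with h0 | h0 <;> subst h0 <;> simp

private lemma abs_sub_same (s t : ℝ) (h : 0 ≤ s * t) : |s - t| = abs (|s| - |t|) := by
  rcases le_total 0 s with hs | hs <;> rcases le_total 0 t with ht | ht
  · rw [abs_of_nonneg hs, abs_of_nonneg ht]
  · rcases mul_eq_zero.mp (le_antisymm (mul_nonpos_of_nonneg_of_nonpos hs ht) h) with h0 | h0 <;>
      subst h0 <;> simp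
  · rcases mul_eq_zero.mp (le_antisymm (mul_nonpos_of_nonpos_of_nonneg hs ht) h) with h0 | h0 <;>
      subst h0 <;> simp
  · rw [abs_of_nonpos hs, abs_of_nonpos ht, ← abs_neg]; ring_nf

set_option maxHeartbeats 1000000 in
private lemma canberra_nonneg (x y z : ℝ) (hx : 0 ≤ x) (hy : 0 ≤ y) (hz : 0 ≤ z) :
    |x - z| / (x + z) ≤ |x - y| / (x + y) + |y - z| / (y + z) := by
  rcases eq_or_lt_of_le (by positivity : (0:ℝ) ≤ x + z) with h1 | h1
  · rw [← h1, div_zero]; positivity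
  rcases eq_or_lt_of_le (by positivity : (0:ℝ) ≤ x + y) with h2 | h2
  · have hx0 : x = 0 := by linarith
    have hy0 : y = 0 := by linarith
    subst hx0; subst hy0; simp
  rcases eq_or_lt_of_le (by positivity : (0:ℝ) ≤ y + z) with h3 | h3
  · have hy0 : y = 0 := by linarith
    have hz0 : z = 0 := by linarith
    subst hy0; subst hz0; simp
  rw [div_add_div _ _ (ne_of_gt h2) (ne_of_gt h3), div_le_div_iff₀ h1 (by positivity)]
  rcases abs_cases (x - z) with ⟨e1, s1⟩ | ⟨e1, s1⟩ <;>
    rcases abs_cases (x - y) with ⟨e2, s2⟩ | ⟨e2, s2⟩ <;>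
    rcases abs_cases (y - z) with ⟨e3, s3⟩ | ⟨e3, s3⟩ <;>
    rw [e1, e2, e3] <;>
    first
    | nlinarith [mul_nonneg (mul_nonneg s2 s3) s1, mul_nonneg hx hy, mul_nonneg hy hz,
        mul_nonneg hx hz, mul_nonneg (mul_nonneg hx hy) hz]
    | nlinarith [mul_pos (mul_pos (neg_pos.mpr s2) (neg_pos.mpr s3)) (neg_pos.mpr s1),
        mul_nonneg hx hy, mul_nonneg hy hz, mul_nonneg hx hz, mul_nonneg (mul_nonneg hx hy) hz]
    | nlinarith [mul_nonneg hx hy, mul_nonneg hy hz, mul_nonneg hx hz,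
        mul_nonneg (mul_nonneg hx hy) hz, mul_nonneg (mul_nonneg hx hx) hy,
        mul_nonneg (mul_nonneg hy hy) hx, mul_nonneg (mul_nonneg hy hy) hz,
        mul_nonneg (mul_nonneg hz hz) hy, mul_nonneg (mul_nonneg hx hx) hz,
        mul_nonneg (mul_nonneg hz hz) hx]

theorem canberra_one_dim_triangle (a b c : ℝ) :
    |a - c| / (|a| + |c|) ≤ |a - b| / (|a| + |b|) + |b - c| / (|b| + |c|) := by
  rcases le_or_gt 0 (a * c) with hac | hac
  · have key := canberra_nonneg |a| |b| |c| (abs_nonneg a) (abs_nonneg b) (abs_nonneg c)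
    rw [← abs_sub_same a c hac] at key
    refine key.trans (add_le_add ?_ ?_)
    · exact div_le_div_of_nonneg_right (abs_abs_sub_abs_le_abs_sub a b) (by positivity)
    · exact div_le_div_of_nonneg_right (abs_abs_sub_abs_le_abs_sub b c) (by positivity)
  · have ha : a ≠ 0 := by rintro rfl; simp at hac
    have hc : c ≠ 0 := by rintro rfl; simp at hac
    have hL : |a - c| / (|a| + |c|) = 1 := by
      rw [abs_sub_opp a c hac.le, div_self (by positivity)]
    rw [hL]
    rcases le_or_gt (a * b) 0 with hab | hab
    · have h1 : |a - b| / (|a| + |b|) = 1 := by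
        rw [abs_sub_opp a b hab, div_self (by positivity)]
      rw [h1]
      have : (0:ℝ) ≤ |b - c| / (|b| + |c|) := by positivity
      linarith
    · have hbc : b * c ≤ 0 := by nlinarith [sq_nonneg a, mul_pos hab hab]
      have hb : b ≠ 0 := by rintro rfl; simp at hab
      have h2 : |b - c| / (|b| + |c|) = 1 := by
        rw [abs_sub_opp b c hbc, div_self (by positivity)]
      rw [h2]
      have : (0:ℝ) ≤ |a - b| / (|a| + |b|) := by positivity
      linarith
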